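/- (Monotonicity of the basic reproduction number) Let k, n be positive integers and let F, V_od : ℝᵏ → ℝⁿˣⁿ be matrix-valued functions taking entrywise-nonnegative values that are entrywise non-increasing in θ (with respect to the entrywise order on ℝᵏ), and let V_d : ℝᵏ → ℝⁿˣⁿ take diagonal, entrywise-nonnegative values and be entrywise non-decreasing in θ. Suppose θ, θ' ∈ ℝᵏ satisfy θ ≤ θ' entrywise and that both V(θ) := V_od(θ) - V_d(θ) and V(θ') := V_od(θ') - V_d(θ') are Metzler and Hurwitz. Then R₀(θ') ≤ R₀(θ), where R₀(θ) = ρ( F(θ) · V(θ)⁻¹ ). -/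

import Mathlib

/-!
A Metzler–Hurwitz matrix `V` equals `-s (1 - N)` with `N = 1 + s⁻¹ V` entrywise nonnegative and,
for `s` large, of spectral radius `< 1`; the Neumann series `(1 - N)⁻¹ = ∑ Nᵐ` then shows
`V⁻¹ ≤ 0` entrywise. The resolvent identity `V'⁻¹ - V⁻¹ = (-V'⁻¹) (V - V') (-V⁻¹)` turns
`V(θ') ≤ V(θ)` into `0 ≤ -V(θ')⁻¹ ≤ -V(θ)⁻¹`, so `0 ≤ F(θ') (-V(θ')⁻¹) ≤ F(θ) (-V(θ)⁻¹)`.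
Finally the spectral radius is monotone on nonnegative matrices, because by Gelfand's formula it
is the limit of `‖Aᵐ‖ ^ (1 / m)` for the `∞`-operator norm, which is monotone in the entries.
-/

open Matrix

/-- A square real matrix is *Metzler* if all its off-diagonal entries are nonnegative. -/
def IsMetzler {n : ℕ} (A : Matrix (Fin n) (Fin n) ℝ) : Prop :=
  ∀ i j, i ≠ j → 0 ≤ A i j

/-- A square real matrix is *Hurwitz* if every complex eigenvalue has negative real part. -/
def IsHurwitz {n : ℕ} (A : Matrix (Fin n) (Fin n) ℝ) : Prop :=
  ∀ μ ∈ spectrum ℂ (A.map Complex.ofReal), μ.re < 0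

/-- The spectral radius of a square real matrix: the maximum modulus of its complex
eigenvalues. -/
noncomputable def specRad {n : ℕ} (A : Matrix (Fin n) (Fin n) ℝ) : ℝ :=
  sSup {x : ℝ | ∃ μ ∈ spectrum ℂ (A.map Complex.ofReal), x = ‖μ‖}

open Filter

theorem summable_norm_pow_of_spectralRadius_lt_one {A : Type*} [NormedRing A]
    [NormedAlgebra ℂ A] [CompleteSpace A] {a : A} (ha : spectralRadius ℂ a < 1) :
    Summable (‖a ^ ·‖) := by
  obtain ⟨r, har, hr1⟩ := ENNReal.lt_iff_exists_nnreal_btwn.mp ha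
  have hgelfand := spectrum.pow_nnnorm_pow_one_div_tendsto_nhds_spectralRadius a
  have hbound : ∀ᶠ m : ℕ in atTop, ‖‖a ^ m‖‖ ≤ (r : ℝ) ^ m := by
    filter_upwards [hgelfand.eventually_lt_const har, eventually_gt_atTop 0] with m hm hm0
    rw [one_div, ENNReal.rpow_inv_lt_iff (by positivity), ENNReal.rpow_natCast] at hm
    rw [norm_norm, ← coe_nnnorm, ← NNReal.coe_pow, NNReal.coe_le_coe]
    exact_mod_cast hm.le
  exact .of_norm_bounded_eventually_nat
    (summable_geometric_of_lt_one r.2 (by exact_mod_cast hr1)) hbound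

theorem Complex.eventually_norm_add_ofReal_lt {μ : ℂ} (hμ : μ.re < 0) :
    ∀ᶠ s : ℝ in atTop, ‖μ + s‖ < s := by
  filter_upwards [eventually_gt_atTop (‖μ‖ ^ 2 / (-2 * μ.re)), eventually_gt_atTop 0]
    with s hs hs0
  rw [div_lt_iff₀ (by linarith)] at hs
  have hsq : ‖μ + s‖ ^ 2 = ‖μ‖ ^ 2 + 2 * s * μ.re + s ^ 2 := by
    simp only [Complex.sq_norm, Complex.normSq_apply, Complex.add_re, Complex.add_im,
      Complex.ofReal_re, Complex.ofReal_im]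
    ring
  exact lt_of_pow_lt_pow_left₀ 2 hs0.le (by nlinarith)

namespace Matrix

section Entrywise

variable {ι R : Type*} [Fintype ι] [Semiring R] [PartialOrder R] [IsOrderedRing R]
  {A B C D : Matrix ι ι R}

theorem entry_mul_nonneg (hA : ∀ i j, 0 ≤ A i j) (hB : ∀ i j, 0 ≤ B i j) (i j : ι) :
    0 ≤ (A * B) i j :=
  Finset.sum_nonneg fun k _ => mul_nonneg (hA i k) (hB k j)

theorem entry_mul_le_mul (hA : ∀ i j, 0 ≤ A i j) (hAB : ∀ i j, A i j ≤ B i j)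
    (hC : ∀ i j, 0 ≤ C i j) (hCD : ∀ i j, C i j ≤ D i j) (i j : ι) :
    (A * C) i j ≤ (B * D) i j :=
  Finset.sum_le_sum fun k _ =>
    mul_le_mul (hAB i k) (hCD k j) (hC k j) ((hA i k).trans (hAB i k))

variable [DecidableEq ι]

theorem entry_pow_nonneg (hA : ∀ i j, 0 ≤ A i j) (m : ℕ) (i j : ι) : 0 ≤ (A ^ m) i j := by
  induction m generalizing i j with
  | zero => rw [pow_zero, one_apply]; split_ifs <;> norm_num
  | succ m ih => rw [pow_succ]; exact entry_mul_nonneg ih hA i j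

theorem entry_pow_le_pow (hA : ∀ i j, 0 ≤ A i j) (hAB : ∀ i j, A i j ≤ B i j) (m : ℕ)
    (i j : ι) : (A ^ m) i j ≤ (B ^ m) i j := by
  induction m generalizing i j with
  | zero => rfl
  | succ m ih =>
    rw [pow_succ, pow_succ]
    exact entry_mul_le_mul (entry_pow_nonneg hA m) ih hA hAB i j

end Entrywise

section LinftyNorm

attribute [local instance] Matrix.linftyOpNormedAddCommGroup Matrix.linftyOpNormedRing
  Matrix.linftyOpNormedAlgebra

variable {ι : Type*} [Fintype ι]

theorem linfty_opNNNorm_map_ofReal (A : Matrix ι ι ℝ) :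
    ‖A.map Complex.ofReal‖₊ = ‖A‖₊ := by
  simp only [linfty_opNNNorm_def, map_apply, ← Complex.nnnorm_real]

theorem linfty_opNNNorm_le_of_entry_le {A B : Matrix ι ι ℝ} (hA : ∀ i j, 0 ≤ A i j)
    (hAB : ∀ i j, A i j ≤ B i j) : ‖A‖₊ ≤ ‖B‖₊ := by
  rw [linfty_opNNNorm_def, linfty_opNNNorm_def]
  refine Finset.sup_mono_fun fun i _ => Finset.sum_le_sum fun j _ => ?_
  rw [← NNReal.coe_le_coe, coe_nnnorm, coe_nnnorm, Real.norm_of_nonneg (hA i j),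
    Real.norm_of_nonneg ((hA i j).trans (hAB i j))]
  exact hAB i j

variable [DecidableEq ι]

theorem map_ofReal_pow (A : Matrix ι ι ℝ) (m : ℕ) :
    (A ^ m).map Complex.ofReal = A.map Complex.ofReal ^ m :=
  A.map_pow Complex.ofRealHom m

theorem spectralRadius_map_ofReal_le_of_entry_le {A B : Matrix ι ι ℝ}
    (hA : ∀ i j, 0 ≤ A i j) (hAB : ∀ i j, A i j ≤ B i j) :
    spectralRadius ℂ (A.map Complex.ofReal) ≤ spectralRadius ℂ (B.map Complex.ofReal) := by
  refine le_of_tendsto_of_tendsto'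
    (spectrum.pow_nnnorm_pow_one_div_tendsto_nhds_spectralRadius _)
    (spectrum.pow_nnnorm_pow_one_div_tendsto_nhds_spectralRadius _) fun m => ?_
  gcongr
  rw [← map_ofReal_pow, ← map_ofReal_pow, linfty_opNNNorm_map_ofReal, linfty_opNNNorm_map_ofReal]
  exact linfty_opNNNorm_le_of_entry_le (entry_pow_nonneg hA m) (entry_pow_le_pow hA hAB m)

theorem entry_inv_one_sub_nonneg {N : Matrix ι ι ℝ} (hN : ∀ i j, 0 ≤ N i j)
    (hρ : spectralRadius ℂ (N.map Complex.ofReal) < 1) (i j : ι) : 0 ≤ (1 - N)⁻¹ i j := by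
  have hsum : Summable (N ^ ·) := by
    refine .of_norm ?_
    simpa only [← map_ofReal_pow, ← coe_nnnorm, linfty_opNNNorm_map_ofReal] using
      summable_norm_pow_of_spectralRadius_lt_one hρ
  rw [inv_eq_right_inv hsum.one_sub_mul_tsum_pow]
  have hrow : (∑' m, N ^ m) i = ∑' m, (N ^ m) i := tsum_apply hsum
  rw [hrow, tsum_apply (Pi.summable.mp hsum i)]
  exact tsum_nonneg fun m => entry_pow_nonneg hN m i j

end LinftyNorm

theorem entry_inv_le_inv_of_le {ι R : Type*} [Fintype ι] [DecidableEq ι] [CommRing R]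
    [PartialOrder R] [IsOrderedRing R] {V V' : Matrix ι ι R} (hV : IsUnit V.det)
    (hV' : IsUnit V'.det) (hVinv : ∀ i j, V⁻¹ i j ≤ 0) (hV'inv : ∀ i j, V'⁻¹ i j ≤ 0)
    (hle : ∀ i j, V' i j ≤ V i j) (i j : ι) : V⁻¹ i j ≤ V'⁻¹ i j := by
  have hresolvent : V'⁻¹ - V⁻¹ = -V'⁻¹ * (V - V') * -V⁻¹ := by
    calc V'⁻¹ - V⁻¹ = V'⁻¹ * (V * V⁻¹) - (V'⁻¹ * V') * V⁻¹ := by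
          rw [mul_nonsing_inv _ hV, nonsing_inv_mul _ hV', mul_one, one_mul]
      _ = -V'⁻¹ * (V - V') * -V⁻¹ := by noncomm_ring
  have hdiff : 0 ≤ (V'⁻¹ - V⁻¹) i j := by
    rw [hresolvent]
    refine entry_mul_nonneg (entry_mul_nonneg ?_ ?_) ?_ i j
    · exact fun i j => neg_nonneg.mpr (hV'inv i j)
    · exact fun i j => sub_nonneg.mpr (hle i j)
    · exact fun i j => neg_nonneg.mpr (hVinv i j)
  exact sub_nonneg.mp hdiff

end Matrix

section SpectralRadius

variable {n : ℕ}

theorem specRad_nonneg (A : Matrix (Fin n) (Fin n) ℝ) : 0 ≤ specRad A :=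
  Real.sSup_nonneg fun _ ⟨μ, _, hx⟩ => hx ▸ norm_nonneg μ

theorem ofReal_specRad (A : Matrix (Fin n) (Fin n) ℝ) :
    ENNReal.ofReal (specRad A) = spectralRadius ℂ (A.map Complex.ofReal) := by
  set S := {x : ℝ | ∃ μ ∈ spectrum ℂ (A.map Complex.ofReal), x = ‖μ‖}
  have hS : S.Finite := by
    refine ((A.map Complex.ofReal).finite_spectrum.image (‖·‖)).subset ?_
    rintro _ ⟨μ, hμ, rfl⟩
    exact ⟨μ, hμ, rfl⟩
  refine le_antisymm ?_ (iSup₂_le fun μ hμ => ?_)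
  · rcases S.eq_empty_or_nonempty with hempty | hne
    · simp [specRad, S, hempty]
    · obtain ⟨μ, hμ, hsup⟩ := hne.csSup_mem hS
      rw [specRad, hsup, ofReal_norm, enorm_eq_nnnorm]
      exact le_iSup₂ (f := fun k (_ : k ∈ spectrum ℂ _) => (‖k‖₊ : ENNReal)) μ hμ
  · rw [← enorm_eq_nnnorm, ← ofReal_norm]
    exact ENNReal.ofReal_le_ofReal (le_csSup hS.bddAbove ⟨μ, hμ, rfl⟩)

theorem specRad_neg (A : Matrix (Fin n) (Fin n) ℝ) : specRad (-A) = specRad A := by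
  simp only [specRad, Matrix.map_neg _ Complex.ofReal_neg, ← spectrum.neg_eq, Set.mem_neg]
  congr 1
  ext x
  constructor <;> rintro ⟨μ, hμ, rfl⟩ <;> exact ⟨-μ, by simpa using hμ, (norm_neg μ).symm⟩

theorem specRad_le_specRad_of_entry_le {A B : Matrix (Fin n) (Fin n) ℝ}
    (hA : ∀ i j, 0 ≤ A i j) (hAB : ∀ i j, A i j ≤ B i j) : specRad A ≤ specRad B := by
  rw [← ENNReal.ofReal_le_ofReal_iff (specRad_nonneg B), ofReal_specRad, ofReal_specRad]
  exact Matrix.spectralRadius_map_ofReal_le_of_entry_le hA hAB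

end SpectralRadius

section MetzlerHurwitz

attribute [local instance] Matrix.linftyOpNormedAddCommGroup Matrix.linftyOpNormedRing
  Matrix.linftyOpNormedAlgebra

variable {n : ℕ} {V : Matrix (Fin n) (Fin n) ℝ}

theorem IsHurwitz.isUnit_det (hH : IsHurwitz V) : IsUnit V.det := by
  have hunit : IsUnit (V.map Complex.ofReal) := by
    by_contra hnot
    simpa using hH 0 (spectrum.zero_mem_iff ℂ |>.mpr hnot)
  have hdet : (V.map Complex.ofReal).det = (V.det : ℂ) := (Complex.ofRealHom.map_det V).symm
  rw [isUnit_iff_isUnit_det, hdet] at hunit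
  simpa using hunit

theorem IsHurwitz.exists_shift (hH : IsHurwitz V) :
    ∃ s : ℝ, 0 < s ∧ (∀ i, -s ≤ V i i) ∧
      ∀ μ ∈ spectrum ℂ (V.map Complex.ofReal), ‖μ + s‖ < s := by
  have hspec := (V.map Complex.ofReal).finite_spectrum.eventually_all.mpr
    fun μ hμ => Complex.eventually_norm_add_ofReal_lt (hH μ hμ)
  have hdiag := eventually_all.mpr fun i => eventually_ge_atTop (-V i i)
  obtain ⟨s, hs, hdiag, hspec⟩ := ((eventually_gt_atTop 0).and (hdiag.and hspec)).exists
  exact ⟨s, hs, fun i => neg_le.mp (hdiag i), hspec⟩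

theorem spectralRadius_one_add_smul_lt_one {s : ℝ} (hs : 0 < s)
    (hV : ∀ μ ∈ spectrum ℂ (V.map Complex.ofReal), ‖μ + s‖ < s) :
    spectralRadius ℂ ((1 + s⁻¹ • V).map Complex.ofReal) < 1 := by
  have hs' : (s : ℂ) ≠ 0 := Complex.ofReal_ne_zero.mpr hs.ne'
  set u : ℂˣ := Units.mk0 (s : ℂ)⁻¹ (inv_ne_zero hs')
  have hmap : (1 + s⁻¹ • V).map Complex.ofReal =
      algebraMap ℂ _ 1 + u • V.map Complex.ofReal := by
    ext i j
    rcases eq_or_ne i j with rfl | hij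
    · simp [u]
    · simp [u, one_apply_ne hij]
  have hnorm : ∀ ν ∈ spectrum ℂ ((1 + s⁻¹ • V).map Complex.ofReal), ‖ν‖₊ < 1 := by
    rw [hmap, ← spectrum.singleton_add_eq, spectrum.unit_smul_eq_smul]
    rintro _ ⟨_, rfl, _, ⟨μ, hμ, rfl⟩, rfl⟩
    have hν : 1 + (u : ℂ) • μ = (s : ℂ)⁻¹ * (μ + s) := by
      simp only [u, Units.val_mk0, smul_eq_mul]
      field_simp
      ring
    beta_reduce
    rw [← NNReal.coe_lt_coe, coe_nnnorm, hν, norm_mul, norm_inv, Complex.norm_real,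
      Real.norm_of_nonneg hs.le, NNReal.coe_one, inv_mul_lt_one₀ hs]
    exact hV μ hμ
  rcases (spectrum ℂ ((1 + s⁻¹ • V).map Complex.ofReal)).eq_empty_or_nonempty with hempty | hne
  · simp [spectralRadius, hempty]
  · exact_mod_cast spectrum.spectralRadius_lt_of_forall_lt_of_nonempty hne hnorm

theorem IsMetzler.entry_inv_nonpos (hM : IsMetzler V) (hH : IsHurwitz V) (i j : Fin n) :
    V⁻¹ i j ≤ 0 := by
  obtain ⟨s, hs, hdiag, hspec⟩ := hH.exists_shift
  set N := 1 + s⁻¹ • V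
  have hN : ∀ i j, 0 ≤ N i j := by
    intro i j
    rcases eq_or_ne i j with rfl | hij
    · simp only [N, Matrix.add_apply, one_apply_eq, Matrix.smul_apply, smul_eq_mul]
      rw [← inv_mul_cancel₀ hs.ne', ← mul_add]
      exact mul_nonneg (inv_nonneg.mpr hs.le) (by linarith [hdiag i])
    · simpa [N, one_apply_ne hij] using mul_nonneg (inv_nonneg.mpr hs.le) (hM i j hij)
  have hVN : V = (-s) • (1 - N) := by
    simp [N, smul_smul, hs.ne']
  have hdet : IsUnit (1 - N).det := by
    have := hH.isUnit_det
    rw [hVN, det_smul] at this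
    exact isUnit_of_mul_isUnit_right this
  have hVinv : V⁻¹ = (-s)⁻¹ • (1 - N)⁻¹ := by
    refine inv_eq_right_inv ?_
    rw [hVN, smul_mul_smul_comm, mul_inv_cancel₀ (neg_ne_zero.mpr hs.ne'), one_smul,
      mul_nonsing_inv _ hdet]
  rw [hVinv]
  exact mul_nonpos_of_nonpos_of_nonneg (by simp [hs.le])
    (Matrix.entry_inv_one_sub_nonneg hN (spectralRadius_one_add_smul_lt_one hs hspec) i j)

end MetzlerHurwitz

theorem basic_reproduction_number_antitone_general {k n : ℕ}
    (F Vod Vd : (Fin k → ℝ) → Matrix (Fin n) (Fin n) ℝ)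
    (hFnonneg : ∀ θ i j, 0 ≤ F θ i j)
    (hFanti : ∀ θ θ' : Fin k → ℝ, (∀ i, θ i ≤ θ' i) → ∀ i j, F θ' i j ≤ F θ i j)
    (hVodanti : ∀ θ θ' : Fin k → ℝ, (∀ i, θ i ≤ θ' i) → ∀ i j, Vod θ' i j ≤ Vod θ i j)
    (hVdmono : ∀ θ θ' : Fin k → ℝ, (∀ i, θ i ≤ θ' i) → ∀ i j, Vd θ i j ≤ Vd θ' i j)
    (θ θ' : Fin k → ℝ) (hθ : ∀ i, θ i ≤ θ' i)
    (hVmetzler : IsMetzler (Vod θ - Vd θ)) (hVhurwitz : IsHurwitz (Vod θ - Vd θ))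
    (hV'metzler : IsMetzler (Vod θ' - Vd θ')) (hV'hurwitz : IsHurwitz (Vod θ' - Vd θ')) :
    specRad (F θ' * (Vod θ' - Vd θ')⁻¹) ≤ specRad (F θ * (Vod θ - Vd θ)⁻¹) := by
  set V := Vod θ - Vd θ
  set V' := Vod θ' - Vd θ'
  have hVinv := hVmetzler.entry_inv_nonpos hVhurwitz
  have hV'inv := hV'metzler.entry_inv_nonpos hV'hurwitz
  have hV'le : ∀ i j, V' i j ≤ V i j := fun i j => by
    simp only [V, V', Matrix.sub_apply]
    linarith [hVodanti θ θ' hθ i j, hVdmono θ θ' hθ i j]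
  have hinv := Matrix.entry_inv_le_inv_of_le hVhurwitz.isUnit_det hV'hurwitz.isUnit_det
    hVinv hV'inv hV'le
  rw [← specRad_neg, ← mul_neg, ← specRad_neg (F θ * V⁻¹), ← mul_neg]
  exact specRad_le_specRad_of_entry_le
    (Matrix.entry_mul_nonneg (hFnonneg θ') fun i j => neg_nonneg.mpr (hV'inv i j))
    (Matrix.entry_mul_le_mul (hFnonneg θ') (hFanti θ θ' hθ)
      (fun i j => neg_nonneg.mpr (hV'inv i j)) fun i j => neg_le_neg (hinv i j))

/-- Monotonicity of the basic reproduction number in the resource vector `θ`. -/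
theorem basic_reproduction_number_antitone {k n : ℕ} (hk : 0 < k) (hn : 0 < n)
    (F Vod Vd : (Fin k → ℝ) → Matrix (Fin n) (Fin n) ℝ)
    (hFnonneg : ∀ θ i j, 0 ≤ F θ i j)
    (hFanti : ∀ θ θ' : Fin k → ℝ, (∀ i, θ i ≤ θ' i) → ∀ i j, F θ' i j ≤ F θ i j)
    (hVodnonneg : ∀ θ i j, 0 ≤ Vod θ i j)
    (hVodanti : ∀ θ θ' : Fin k → ℝ, (∀ i, θ i ≤ θ' i) → ∀ i j, Vod θ' i j ≤ Vod θ i j)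
    (hVddiag : ∀ θ i j, i ≠ j → Vd θ i j = 0)
    (hVdnonneg : ∀ θ i j, 0 ≤ Vd θ i j)
    (hVdmono : ∀ θ θ' : Fin k → ℝ, (∀ i, θ i ≤ θ' i) → ∀ i j, Vd θ i j ≤ Vd θ' i j)
    (θ θ' : Fin k → ℝ) (hθ : ∀ i, θ i ≤ θ' i)
    (hVmetzler : IsMetzler (Vod θ - Vd θ)) (hVhurwitz : IsHurwitz (Vod θ - Vd θ))
    (hV'metzler : IsMetzler (Vod θ' - Vd θ')) (hV'hurwitz : IsHurwitz (Vod θ' - Vd θ')) :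
    specRad (F θ' * (Vod θ' - Vd θ')⁻¹) ≤ specRad (F θ * (Vod θ - Vd θ)⁻¹) :=
  basic_reproduction_number_antitone_general F Vod Vd hFnonneg hFanti hVodanti hVdmono θ θ' hθ
    hVmetzler hVhurwitz hV'metzler hV'hurwitz
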